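/- Let C = I_X be a group code in F[G*] defined over F. The extended code ~C is Hermitian self-dual if and only if C is a split group code associated to some splitting (Z = {0}, X_0, X_1) of G given by −q, i.e., C = I_{X_0} for a partition G = {0} ∪ X_0 ∪ X_1 with τ_{−q}(X_0) = X_1 and τ_{−q}(X_1) = X_0. -/

import Mathlib

open scoped BigOperators
open scoped BigOperators

/-- The evaluation of the element of `F[G*]` with coefficient function `a` at `x ∈ G`,
namely `f(x) = ∑ ψ, a ψ * ψ x ∈ K`. -/
noncomputable def evalF {G : Type} [AddCommGroup G] {F K : Type} [Field F] [Field K]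
    [Algebra F K] [Fintype (AddChar G K)] (a : AddChar G K → F) (x : G) : K :=
  ∑ ψ : AddChar G K, algebraMap F K (a ψ) * ψ x

/-- The code `I_X = {f ∈ F[G*] : f(x) = 0 for all x ∈ X}`. -/
noncomputable def codeSet {G : Type} [AddCommGroup G] (F K : Type) [Field F] [Field K]
    [Algebra F K] [Fintype (AddChar G K)] (X : Set G) : Set (AddChar G K → F) :=
  {a | ∀ x ∈ X, evalF a x = 0}

/-- The Hermitian inner product `⟨f, g⟩_H = ∑ ψ, a ψ * (b ψ)^q` on `F[G*]`. -/
noncomputable def herm {G : Type} [AddCommGroup G] {F K : Type} [Field F] [Field K]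
    [Algebra F K] [Fintype (AddChar G K)] (q : ℕ) (a b : AddChar G K → F) : F :=
  ∑ ψ : AddChar G K, a ψ * (b ψ) ^ q

/-- The Hermitian dual `C^{⊥_H}` of a code `C ⊆ F[G*]`. -/
noncomputable def hermDual {G : Type} [AddCommGroup G] (F K : Type) [Field F] [Field K]
    [Algebra F K] [Fintype (AddChar G K)] (q : ℕ) (C : Set (AddChar G K → F)) :
    Set (AddChar G K → F) :=
  {a | ∀ b ∈ C, herm q a b = 0}

/-- The image `τ_s(X)` of `X ⊆ G` under the multiplication-by-`s` map `τ_s : x ↦ s • x`. -/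
def tauImg {G : Type} [AddCommGroup G] (s : ℤ) (X : Set G) : Set G :=
  (fun x : G => s • x) '' X

/-- The extension `~f = (f, -γ f(0))` of the element of `F[G*]` with coefficient function
`a`; note `f(0) = ∑ ψ, a ψ` in `F`.  The extended word is indexed by
`Option (AddChar G K)`: `none` is the extension coordinate. -/
noncomputable def extWord {G : Type} [AddCommGroup G] {F K : Type} [Field F] [Field K]
    [Algebra F K] [Fintype (AddChar G K)] (γ : F) (a : AddChar G K → F) :
    Option (AddChar G K) → F :=
  fun o => o.elim (-γ * ∑ ψ : AddChar G K, a ψ) a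

/-- The extended code `~C = { ~f : f ∈ C } ⊆ F[G*] × F`. -/
noncomputable def extCode {G : Type} [AddCommGroup G] {F K : Type} [Field F] [Field K]
    [Algebra F K] [Fintype (AddChar G K)] (γ : F) (C : Set (AddChar G K → F)) :
    Set (Option (AddChar G K) → F) :=
  extWord γ '' C

/-- The Hermitian inner product on `F[G*] × F`:
`⟨(f,α),(g,β)⟩_H = ⟨f,g⟩_H + α β^q`. -/
noncomputable def hermExt {G : Type} [AddCommGroup G] {F K : Type} [Field F] [Field K]
    [Algebra F K] [Fintype (AddChar G K)] (q : ℕ) (v w : Option (AddChar G K) → F) : F :=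
  ∑ o : Option (AddChar G K), v o * (w o) ^ q

/-- The Hermitian dual of a code in `F[G*] × F`. -/
noncomputable def dualExt {G : Type} [AddCommGroup G] (F K : Type) [Field F] [Field K]
    [Algebra F K] [Fintype (AddChar G K)] (q : ℕ) (S : Set (Option (AddChar G K) → F)) :
    Set (Option (AddChar G K) → F) :=
  {v | ∀ w ∈ S, hermExt q v w = 0}

set_option linter.unusedSectionVars false
set_option maxHeartbeats 1000000 in
section
end

section Aux
variable {G : Type} [AddCommGroup G] [Fintype G] {F K : Type} [Field F] [Fintype F] [Field K]
  [Algebra F K] [Fintype (AddChar G K)] {q p e : ℕ} [hp : Fact p.Prime] [CharP F p] [CharP K p]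
  (hqpe : q = p ^ e) (he : 0 < e) (hF : Fintype.card F = q ^ 2)
  (hn : Nat.Coprime (Fintype.card G) q)
  (hK : ∃ ζ : K, IsPrimitiveRoot ζ (AddMonoid.exponent G))

include hqpe in
lemma aux_sum_pow {R : Type} [CommRing R] [CharP R p] {ι : Type*} (j : ℕ) (s : Finset ι)
    (f : ι → R) : (∑ i ∈ s, f i) ^ q ^ j = ∑ i ∈ s, f i ^ q ^ j := by
  have h : ∀ x : R, x ^ q ^ j = iterateFrobenius R p (e * j) x := by
    intro x; rw [iterateFrobenius_def, hqpe, pow_mul]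
  simp_rw [h]
  exact map_sum (iterateFrobenius R p (e * j)) f s

include hqpe in
lemma aux_neg_pow {R : Type} [CommRing R] [CharP R p] (j : ℕ) (x : R) :
    (-x) ^ q ^ j = -(x ^ q ^ j) := by
  have h : ∀ x : R, x ^ q ^ j = iterateFrobenius R p (e * j) x := by
    intro x; rw [iterateFrobenius_def, hqpe, pow_mul]
  rw [h, h]
  exact map_neg (iterateFrobenius R p (e * j)) x

include hF in
lemma aux_F_pow_q2 (c : F) : c ^ q ^ 2 = c := by
  rw [← hF]; exact FiniteField.pow_card c

include hF in
lemma aux_F_pow (c : F) (j : ℕ) : c ^ q ^ (2 * j) = c := by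
  induction j with
  | zero => simp
  | succ k ih =>
      have : 2 * (k + 1) = 2 * k + 2 := by ring
      rw [this, pow_add, pow_mul, ih]
      exact aux_F_pow_q2 hF c

include hqpe he in
lemma aux_q2 : 2 ≤ q := by
  calc 2 ≤ p := hp.out.two_le
  _ = p ^ 1 := (pow_one p).symm
  _ ≤ p ^ e := Nat.pow_le_pow_right hp.out.pos he
  _ = q := hqpe.symm

include hK in
lemma aux_heru : HasEnoughRootsOfUnity K (Monoid.exponent (Multiplicative G)) := by
  constructor
  · rw [Monoid.exponent_multiplicative]; exact hK
  · exact inferInstance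

include hK in
lemma aux_sep {x : G} (hx : x ≠ 0) : ∃ ψ : AddChar G K, ψ x ≠ 1 := by
  haveI := aux_heru (G := G) (K := K) hK
  obtain ⟨φ, hφ⟩ := CommGroup.exists_apply_ne_one_of_hasEnoughRootsOfUnity (Multiplicative G) K
    (a := Multiplicative.ofAdd x) (by simpa using hx)
  refine ⟨AddChar.toMonoidHomEquiv.symm ((Units.coeHom K).comp φ), ?_⟩
  rw [AddChar.toMonoidHomEquiv_symm_apply]
  simp only [MonoidHom.coe_comp, Function.comp_apply, Units.coeHom_apply]
  intro h
  exact hφ (Units.ext (by simpa using h))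

include hK in
lemma aux_card : Fintype.card (AddChar G K) = Fintype.card G := by
  haveI := aux_heru (G := G) (K := K) hK
  obtain ⟨em⟩ := CommGroup.monoidHom_mulEquiv_of_hasEnoughRootsOfUnity (Multiplicative G) K
  let e2 : (Multiplicative G →* K) ≃ (Multiplicative G →* Kˣ) :=
    { toFun := fun f => f.toHomUnits
      invFun := fun g => (Units.coeHom K).comp g
      left_inv := fun f => by ext x; simp [MonoidHom.coe_toHomUnits]
      right_inv := fun g => by
        ext x
        simp [MonoidHom.coe_toHomUnits] }
  have hcongr :Nat.card (AddChar G K) = Nat.card G := by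
    have e3 : AddChar G K ≃ G :=
      (AddChar.toMonoidHomEquiv.trans (e2.trans em.toEquiv)).trans Multiplicative.toAdd
    exact Nat.card_congr e3
  simpa [Nat.card_eq_fintype_card] using hcongr

lemma aux_sumG [DecidableEq (AddChar G K)] (ψ : AddChar G K) :
    ∑ x : G, ψ x = if ψ = 0 then (Fintype.card G : K) else 0 := by
  exact AddChar.sum_eq_ite ψ

include hK in
lemma aux_sum_chars [DecidableEq G] (x : G) :
    ∑ ψ : AddChar G K, ψ x = if x = 0 then (Fintype.card G : K) else 0 := by
  classical
  have h := AddChar.sum_eq_ite (A := AddChar G K) (R := K) (AddChar.doubleDualEmb x)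
  simp only [AddChar.doubleDualEmb_apply] at h
  have hiff : (AddChar.doubleDualEmb (M := K) x) = 0 ↔ x = 0 := by
    constructor
    · intro h0
      by_contra hx
      obtain ⟨ψ, hψ⟩ := aux_sep (G := G) (K := K) hK hx
      rw [AddChar.eq_zero_iff] at h0
      exact hψ (by simpa using h0 ψ)
    · rintro rfl
      rw [AddChar.eq_zero_iff]
      intro ψ; simp
  rw [h, aux_card hK]
  by_cases hx : x = 0 <;> simp [hx, hiff]

end Aux

section Aux2
variable {G : Type} [AddCommGroup G] [Fintype G] {F K : Type} [Field F] [Fintype F] [Field K]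
  [Algebra F K] [Fintype (AddChar G K)] {q p e : ℕ} [hp : Fact p.Prime] [CharP F p] [CharP K p]
  (hqpe : q = p ^ e) (he : 0 < e) (hF : Fintype.card F = q ^ 2)
  (hn : Nat.Coprime (Fintype.card G) q)
  (hK : ∃ ζ : K, IsPrimitiveRoot ζ (AddMonoid.exponent G))

lemma aux_pairing (u a : AddChar G K → F) :
    (Fintype.card G : K) * algebraMap F K (∑ ψ : AddChar G K, u ψ * a ψ)
      = ∑ x : G, evalF u (-x) * evalF a x := by
  classical
  have key : ∀ χ ψ : AddChar G K, ∑ x : G, χ (-x) * ψ x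
      = if ψ = χ then (Fintype.card G : K) else 0 := by
    intro χ ψ
    have h1 : ∀ x : G, χ (-x) * ψ x = (ψ - χ) x := fun x => by
      rw [AddChar.sub_apply, mul_comm]
    simp_rw [h1]
    rw [aux_sumG (ψ - χ)]
    by_cases h : ψ = χ <;> simp [h, sub_eq_zero]
  have expand : ∀ x : G, evalF u (-x) * evalF a x
      = ∑ χ : AddChar G K, ∑ ψ : AddChar G K,
          (algebraMap F K (u χ) * algebraMap F K (a ψ)) * (χ (-x) * ψ x) := by
    intro x
    unfold evalF
    rw [Finset.sum_mul_sum]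
    exact Finset.sum_congr rfl fun χ _ => Finset.sum_congr rfl fun ψ _ =>
      mul_mul_mul_comm _ _ _ _
  simp_rw [expand]
  rw [Finset.sum_comm]
  have swap2 : ∀ χ : AddChar G K, ∑ x : G, ∑ ψ : AddChar G K,
      (algebraMap F K (u χ) * algebraMap F K (a ψ)) * (χ (-x) * ψ x)
      = ∑ ψ : AddChar G K, (algebraMap F K (u χ) * algebraMap F K (a ψ))
          * ∑ x : G, (χ (-x) * ψ x) := by
    intro χ
    rw [Finset.sum_comm]
    exact Finset.sum_congr rfl fun ψ _ => (Finset.mul_sum _ _ _).symm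
  simp_rw [swap2, key, mul_ite, mul_zero]
  rw [map_sum]
  simp_rw [Finset.sum_ite_eq' Finset.univ, Finset.mem_univ, if_pos, map_mul]
  rw [Finset.mul_sum]
  exact Finset.sum_congr rfl fun ψ _ => by ring

include hqpe hF in
lemma aux_funct (a : AddChar G K → F) (j : ℕ) (x : G) :
    evalF a ((q ^ (2 * j)) • x) = evalF a x ^ q ^ (2 * j) := by
  unfold evalF
  rw [aux_sum_pow hqpe]
  refine Finset.sum_congr rfl fun ψ _ => ?_
  rw [mul_pow, ← map_pow, aux_F_pow hF, ← AddChar.map_nsmul_eq_pow]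

include hqpe hF in
lemma aux_funct_q (w : AddChar G K → F) (x : G) :
    evalF (fun ψ => w ψ ^ q) (q • x) = evalF w x ^ q := by
  unfold evalF
  have h1 : (∑ ψ : AddChar G K, algebraMap F K (w ψ) * ψ x) ^ q
      = ∑ ψ : AddChar G K, (algebraMap F K (w ψ) * ψ x) ^ q := by
    have := aux_sum_pow (R := K) hqpe 1 Finset.univ
      (fun ψ : AddChar G K => algebraMap F K (w ψ) * ψ x)
    simpa [pow_one] using this
  rw [h1]
  refine Finset.sum_congr rfl fun ψ _ => ?_
  rw [mul_pow, ← map_pow, ← AddChar.map_nsmul_eq_pow]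

include hqpe he hF in
lemma aux_fixed {z : K} (hz : z ^ q ^ 2 = z) : ∃ c : F, algebraMap F K c = z := by
  classical
  have hq2 : 2 ≤ q := aux_q2 hqpe he
  have h2 : 1 < q ^ 2 := by nlinarith
  set P : Polynomial K := Polynomial.X ^ (q ^ 2) - Polynomial.X with hP
  have hP0 : P ≠ 0 := by
    intro h
    have hc := congrArg (fun Q : Polynomial K => Q.coeff (q ^ 2)) h
    simp [hP, Polynomial.coeff_X_pow, Polynomial.coeff_X, h2.ne] at hc
  have hdeg : P.natDegree ≤ q ^ 2 := by
    refine le_trans (Polynomial.natDegree_sub_le _ _) ?_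
    simp only [Polynomial.natDegree_X_pow, Polynomial.natDegree_X]
    omega
  set img : Finset K := Finset.univ.image (algebraMap F K) with himgdef
  have himg : img ⊆ P.roots.toFinset := by
    intro w hw
    rw [himgdef, Finset.mem_image] at hw
    obtain ⟨c, -, rfl⟩ := hw
    rw [Multiset.mem_toFinset, Polynomial.mem_roots hP0]
    show P.IsRoot _
    simp [hP, Polynomial.IsRoot, ← map_pow, aux_F_pow_q2 hF]
  have hcard_img : img.card = q ^ 2 := by
    rw [himgdef, Finset.card_image_of_injective _ (algebraMap F K).injective,
      Finset.card_univ, hF]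
  have hcard_roots : P.roots.toFinset.card ≤ q ^ 2 :=
    le_trans (Multiset.toFinset_card_le _) (le_trans (Polynomial.card_roots' P) hdeg)
  have heq : img = P.roots.toFinset :=
    Finset.eq_of_subset_of_card_le himg (by omega)
  have hzmem : z ∈ P.roots.toFinset := by
    rw [Multiset.mem_toFinset, Polynomial.mem_roots hP0]
    show P.IsRoot z
    simp [hP, Polynomial.IsRoot, hz]
  rw [← heq, himgdef, Finset.mem_image] at hzmem
  obtain ⟨c, -, hc⟩ := hzmem
  exact ⟨c, hc⟩

include hqpe he hn in
lemma aux_p_not_dvd : ¬ p ∣ Fintype.card G := by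
  intro hdvd
  have hpq : p ∣ q := hqpe ▸ dvd_pow_self p he.ne'
  have h1 : p ∣ Nat.gcd (Fintype.card G) q := Nat.dvd_gcd hdvd hpq
  rw [Nat.Coprime.gcd_eq_one hn] at h1
  exact hp.out.one_lt.ne' (Nat.dvd_one.mp h1)

include hqpe he hn in
lemma aux_n_ne : (Fintype.card G : F) ≠ 0 := by
  rw [Ne, CharP.cast_eq_zero_iff F p]
  exact aux_p_not_dvd hqpe he hn

include hqpe he hn in
lemma aux_nK_ne : (Fintype.card G : K) ≠ 0 := by
  rw [Ne, CharP.cast_eq_zero_iff K p]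
  exact aux_p_not_dvd hqpe he hn

lemma aux_smul_one {x : G} {a : ℕ} (ha : a ≡ 1 [MOD addOrderOf x]) : a • x = x := by
  have h := (Nat.ModEq.dvd ha : (addOrderOf x : ℤ) ∣ (1 : ℤ) - a)
  obtain ⟨k, hk⟩ := h
  push_cast at hk
  have hz : (a : ℤ) • x = x := by
    have ha' : (a : ℤ) = 1 - (addOrderOf x : ℤ) * k := by linarith
    have hdk : ((addOrderOf x : ℤ) * k) • x = 0 := by
      rw [mul_comm, mul_zsmul, natCast_zsmul, addOrderOf_nsmul_eq_zero x, smul_zero]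
    rw [ha', sub_zsmul, one_zsmul, hdk]; abel
  rwa [natCast_zsmul] at hz

lemma aux_smul_card {a : ℕ} (ha : a ≡ 1 [MOD Fintype.card G]) (x : G) : a • x = x :=
  aux_smul_one (ha.of_dvd (addOrderOf_dvd_card))

lemma aux_iter_smul (k : ℕ) (x : G) :
    (fun z : G => (q ^ 2) • z)^[k] x = (q ^ (2 * k)) • x := by
  induction k with
  | zero => simp
  | succ k ih =>
      rw [Function.iterate_succ_apply', ih, smul_smul]
      congr 1
      ring

include hn in
lemma aux_pow_tot : ((q ^ 2) ^ (Fintype.card G).totient) ≡ 1 [MOD Fintype.card G] :=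
  Nat.ModEq.pow_totient (hn.pow_right 2).symm

include hn in
lemma aux_iter_id (x : G) :
    (fun z : G => (q ^ 2) • z)^[(Fintype.card G).totient] x = x := by
  rw [aux_iter_smul]
  have h : q ^ (2 * (Fintype.card G).totient) = (q ^ 2) ^ (Fintype.card G).totient := by
    rw [← pow_mul]
  rw [h]
  exact aux_smul_card (aux_pow_tot hn) x

include hn in
lemma aux_periodic (x : G) : x ∈ Function.periodicPts (fun z : G => (q ^ 2) • z) :=
  ⟨(Fintype.card G).totient, Nat.totient_pos.2 Fintype.card_pos, aux_iter_id hn x⟩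

include hn in
lemma aux_smul_inj : Function.Injective (fun z : G => (q ^ 2) • z) := by
  intro x y hxy
  set t := (Fintype.card G).totient with htdef
  have ht : 0 < t := Nat.totient_pos.2 Fintype.card_pos
  have h1 := congrArg (fun z : G => ((q ^ 2) ^ (t - 1)) • z) hxy
  simp only [smul_smul] at h1
  have h2 : (q ^ 2) ^ (t - 1) * q ^ 2 = (q ^ 2) ^ t := by
    rw [← pow_succ, Nat.sub_add_cancel ht]
  rw [h2] at h1
  rwa [aux_smul_card (aux_pow_tot hn) x, aux_smul_card (aux_pow_tot hn) y] at h1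

include hn in
lemma aux_stab_back (Z : Set G) (hZ : ∀ x ∈ Z, (q ^ 2) • x ∈ Z) :
    ∀ x : G, (q ^ 2) • x ∈ Z → x ∈ Z := by
  intro x hx
  have hfwd : ∀ (k : ℕ) (z : G), z ∈ Z → (fun z : G => (q ^ 2) • z)^[k] z ∈ Z := by
    intro k
    induction k with
    | zero => intro z hz; simpa using hz
    | succ k ih =>
        intro z hz
        rw [Function.iterate_succ_apply']
        exact hZ _ (ih z hz)
  set t := (Fintype.card G).totient with htdef
  have ht : 0 < t := Nat.totient_pos.2 Fintype.card_pos
  have hx2 : x = (fun z : G => (q ^ 2) • z)^[t - 1] ((q ^ 2) • x) := by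
    conv_lhs => rw [← aux_iter_id hn x]
    rw [← Function.iterate_succ_apply]
    congr 1
    omega
  rw [hx2]
  exact hfwd _ _ hx

include hn in
lemma aux_orbit_miss (Z : Set G) (hZ : ∀ x ∈ Z, (q ^ 2) • x ∈ Z) (y : G) (hy : y ∉ Z) :
    ∀ j : ℕ, (q ^ (2 * j)) • y ∉ Z := by
  have main : ∀ j : ℕ, (q ^ (2 * j)) • y ∈ Z → y ∈ Z := by
    intro j
    induction j with
    | zero => intro h; simpa using h
    | succ k ih =>
        intro h
        apply ih
        apply aux_stab_back hn Z hZ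
        rw [smul_smul]
        have : q ^ 2 * q ^ (2 * k) = q ^ (2 * (k + 1)) := by rw [← pow_add]; congr 1; ring
        rwa [this]
  exact fun j h => hy (main j h)

end Aux2

section Aux3
variable {G : Type} [AddCommGroup G] [Fintype G] {F K : Type} [Field F] [Fintype F] [Field K]
  [Algebra F K] [Fintype (AddChar G K)] {q p e : ℕ} [hp : Fact p.Prime] [CharP F p] [CharP K p]
  (hqpe : q = p ^ e) (he : 0 < e) (hF : Fintype.card F = q ^ 2)
  (hn : Nat.Coprime (Fintype.card G) q)
  (hK : ∃ ζ : K, IsPrimitiveRoot ζ (AddMonoid.exponent G))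

include hqpe he hF hn hK in
lemma aux_inversion (f : G → K) (hf : ∀ x : G, f ((q ^ 2) • x) = f x ^ q ^ 2) :
    ∃ a : AddChar G K → F, ∀ y : G, evalF a y = f y := by
  classical
  have hnK : ((Fintype.card G : K)) ≠ 0 := aux_nK_ne hqpe he hn
  set t := (Fintype.card G).totient with htdef
  have ht : 0 < t := Nat.totient_pos.2 Fintype.card_pos
  let eq2 : G ≃ G :=
    { toFun := fun z => (q ^ 2) • z
      invFun := fun z => ((q ^ 2) ^ (t - 1)) • z
      left_inv := fun z => by
        show (q ^ 2) ^ (t - 1) • (q ^ 2) • z = z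
        rw [smul_smul]
        have h2 : (q ^ 2) ^ (t - 1) * q ^ 2 = (q ^ 2) ^ t := by
          rw [← pow_succ, Nat.sub_add_cancel ht]
        rw [h2]; exact aux_smul_card (aux_pow_tot hn) z
      right_inv := fun z => by
        show (q ^ 2) • ((q ^ 2) ^ (t - 1)) • z = z
        rw [smul_smul]
        have h2 : q ^ 2 * (q ^ 2) ^ (t - 1) = (q ^ 2) ^ t := by
          rw [← pow_succ', Nat.sub_add_cancel ht]
        rw [h2]; exact aux_smul_card (aux_pow_tot hn) z }
  set atil : AddChar G K → K := fun ψ => (Fintype.card G : K)⁻¹ * ∑ x : G, f x * ψ (-x)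
    with hatil
  have hfix : ∀ ψ : AddChar G K, (atil ψ) ^ q ^ 2 = atil ψ := by
    intro ψ
    rw [hatil]
    simp only
    rw [mul_pow]
    have hn2 : ((Fintype.card G : K))⁻¹ ^ q ^ 2 = ((Fintype.card G : K))⁻¹ := by
      rw [inv_pow]
      congr 1
      have h3 : ((Fintype.card G : K)) = algebraMap F K ((Fintype.card G : F)) := by
        simp
      rw [h3, ← map_pow, aux_F_pow_q2 hF]
    have hsum : (∑ x : G, f x * ψ (-x)) ^ q ^ 2 = ∑ x : G, f x * ψ (-x) := by
      rw [aux_sum_pow hqpe]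
      rw [← Equiv.sum_comp eq2 (fun x => f x * ψ (-x))]
      refine Finset.sum_congr rfl fun x _ => ?_
      exact (show f ((q ^ 2) • x) * ψ (-((q ^ 2) • x)) = (f x * ψ (-x)) ^ q ^ 2 by
        rw [mul_pow, hf, ← smul_neg, AddChar.map_nsmul_eq_pow]).symm
    rw [hn2, hsum]
  choose a ha using fun ψ => aux_fixed hqpe he hF (hfix ψ)
  refine ⟨a, fun y => ?_⟩
  unfold evalF
  simp_rw [ha]
  rw [hatil]
  simp only
  have step : ∀ ψ : AddChar G K,
      ((Fintype.card G : K)⁻¹ * ∑ x : G, f x * ψ (-x)) * ψ y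
      = (Fintype.card G : K)⁻¹ * ∑ x : G, f x * ψ (-x + y) := by
    intro ψ
    rw [mul_assoc, Finset.sum_mul]
    congr 1
    refine Finset.sum_congr rfl fun x _ => ?_
    rw [mul_assoc, AddChar.map_add_eq_mul]
  simp_rw [step]
  rw [← Finset.mul_sum, Finset.sum_comm]
  have inner : ∀ x : G, (∑ ψ : AddChar G K, f x * ψ (-x + y))
      = f x * (if -x + y = 0 then (Fintype.card G : K) else 0) := by
    intro x
    rw [← Finset.mul_sum, aux_sum_chars hK]
  simp_rw [inner]
  have switch : ∀ x : G,
      (f x * if -x + y = 0 then (Fintype.card G : K) else 0)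
      = if x = y then f x * (Fintype.card G : K) else 0 := by
    intro x
    by_cases h : x = y
    · subst h; simp
    · have h2 : ¬(-x + y = 0) := fun hc => h (by
        have := neg_add_eq_zero.mp hc; exact this)
      simp [h, h2]
  simp_rw [switch]
  rw [Finset.sum_ite_eq' Finset.univ y (fun x => f x * (Fintype.card G : K))]
  simp only [Finset.mem_univ, if_true]
  field_simp

include hqpe he in
lemma aux_trace_ex (r : ℕ) (hr : 0 < r) (T : Finset K)
    (hcard : q ^ (2 * (r - 1)) < T.card) :
    ∃ c ∈ T, ∑ j ∈ Finset.range r, c ^ q ^ (2 * j) ≠ 0 := by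
  classical
  have hq2 : 2 ≤ q := aux_q2 hqpe he
  by_contra hcon
  push_neg at hcon
  set P : Polynomial K := ∑ j ∈ Finset.range r, Polynomial.X ^ (q ^ (2 * j)) with hP
  have hcond : ∀ j : ℕ, (q ^ (2 * (r - 1)) = q ^ (2 * j)) ↔ (j = r - 1) := by
    intro j
    constructor
    · intro hpow
      have h2 := Nat.pow_right_injective hq2 hpow
      omega
    · rintro rfl; rfl
  have hP0 : P ≠ 0 := by
    intro h
    have hc := congrArg (fun Q : Polynomial K => Q.coeff (q ^ (2 * (r - 1)))) h
    simp only [hP, Polynomial.finset_sum_coeff, Polynomial.coeff_X_pow,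
      Polynomial.coeff_zero] at hc
    simp_rw [hcond] at hc
    rw [Finset.sum_ite_eq' (Finset.range r) (r - 1) (fun _ => (1 : K))] at hc
    simp [Finset.mem_range, Nat.sub_lt hr] at hc
  have hroots : T ⊆ P.roots.toFinset := by
    intro c hc
    rw [Multiset.mem_toFinset, Polynomial.mem_roots hP0]
    show P.IsRoot c
    have := hcon c hc
    simp only [hP, Polynomial.IsRoot, Polynomial.eval_finset_sum, Polynomial.eval_pow,
      Polynomial.eval_X]
    exact this
  have hle : T.card ≤ q ^ (2 * (r - 1)) := by
    calc T.card ≤ P.roots.toFinset.card := Finset.card_le_card hroots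
    _ ≤ Multiset.card P.roots := Multiset.toFinset_card_le _
    _ ≤ P.natDegree := Polynomial.card_roots' P
    _ ≤ q ^ (2 * (r - 1)) := by
        apply Polynomial.natDegree_sum_le_of_forall_le
        intro j hj
        rw [Polynomial.natDegree_X_pow]
        exact Nat.pow_le_pow_right (by omega) (by
          have := Finset.mem_range.mp hj; omega)
  omega

end Aux3

section Aux4
variable {G : Type} [AddCommGroup G] [Fintype G] {F K : Type} [Field F] [Fintype F] [Field K]
  [Algebra F K] [Fintype (AddChar G K)] {q p e : ℕ} [hp : Fact p.Prime] [CharP F p] [CharP K p]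
  (hqpe : q = p ^ e) (he : 0 < e) (hF : Fintype.card F = q ^ 2)
  (hn : Nat.Coprime (Fintype.card G) q)
  (hK : ∃ ζ : K, IsPrimitiveRoot ζ (AddMonoid.exponent G))

include hqpe he hF hn hK in
lemma aux_trace_t (y : G) (t : K) (ht0 : t ≠ 0)
    (ht : t ^ q ^ (2 * Function.minimalPeriod (fun z : G => (q ^ 2) • z) y) = t) :
    ∃ c : K, c ^ q ^ (2 * Function.minimalPeriod (fun z : G => (q ^ 2) • z) y) = c ∧
      ∑ j ∈ Finset.range (Function.minimalPeriod (fun z : G => (q ^ 2) • z) y),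
        (t * c) ^ q ^ (2 * j) ≠ 0 := by
  classical
  have hq2 : 2 ≤ q := aux_q2 hqpe he
  set rm := Function.minimalPeriod (fun z : G => (q ^ 2) • z) y with hrmdef
  have hrpos : 0 < rm := Function.minimalPeriod_pos_of_mem_periodicPts (aux_periodic hn y)
  set Q := q ^ (2 * rm) with hQdef
  have hQ1 : 1 < Q := by
    have : q ^ 1 ≤ q ^ (2 * rm) := Nat.pow_le_pow_right (by omega) (by omega)
    simp at this; omega
  set d := addOrderOf y with hddef
  have hdpos : 0 < d := addOrderOf_pos y
  -- q^{2 rm} • y = y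
  have hA : Q • y = y := by
    have h1 : (fun z : G => (q ^ 2) • z)^[rm] y = y := Function.iterate_minimalPeriod
    rw [aux_iter_smul] at h1
    exact h1
  -- d ∣ Q - 1
  have hB : (d : ℤ) ∣ (Q : ℤ) - 1 := by
    rw [hddef, addOrderOf_dvd_iff_zsmul_eq_zero, sub_zsmul, one_zsmul]
    rw [natCast_zsmul, hA]
    exact add_neg_cancel y
  -- primitive d-th root of unity
  obtain ⟨ζ, hζ⟩ := hK
  have hm0 : 0 < AddMonoid.exponent G := AddMonoid.ExponentExists.of_finite.exponent_pos
  have hdm : d ∣ AddMonoid.exponent G := AddMonoid.addOrder_dvd_exponent y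
  set ζd := ζ ^ (AddMonoid.exponent G / d) with hζddef
  have hζd : IsPrimitiveRoot ζd d := hζ.pow hm0 ((Nat.div_mul_cancel hdm).symm)
  have hζd0 : ζd ≠ 0 := hζd.ne_zero hdpos.ne'
  -- generic: pow fixed from dvd
  have hpow_of_dvd : ∀ N : ℕ, 0 < N → (d : ℤ) ∣ (N : ℤ) - 1 → ζd ^ N = ζd := by
    intro N hN hdvd
    have hdvd' : d ∣ N - 1 := by
      have : ((N - 1 : ℕ) : ℤ) = (N : ℤ) - 1 := by
        push_cast [Nat.cast_sub hN]; ring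
      rwa [← Int.natCast_dvd_natCast, this]
    have h1 : ζd ^ (N - 1) = 1 := (hζd.pow_eq_one_iff_dvd _).mpr hdvd'
    calc ζd ^ N = ζd ^ ((N - 1) + 1) := by congr 1; omega
    _ = ζd ^ (N - 1) * ζd := by rw [pow_succ]
    _ = ζd := by rw [h1, one_mul]
  -- the subalgebra T
  let T : Subalgebra F K :=
    { carrier := {z : K | z ^ Q = z}
      mul_mem' := fun {a b} ha hb => by
        have ha' : a ^ Q = a := ha
        have hb' : b ^ Q = b := hb
        show (a * b) ^ Q = a * b
        rw [mul_pow, ha', hb']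
      one_mem' := by
        show (1 : K) ^ Q = 1
        exact one_pow Q
      add_mem' := fun {a b} ha hb => by
        have ha' : a ^ Q = a := ha
        have hb' : b ^ Q = b := hb
        show (a + b) ^ Q = a + b
        have hhom : ∀ x : K, x ^ Q = iterateFrobenius K p (e * (2 * rm)) x := by
          intro x
          rw [iterateFrobenius_def]
          congr 1
          rw [hQdef, hqpe, ← pow_mul]
        rw [hhom, map_add, ← hhom a, ← hhom b, ha', hb']
      zero_mem' := by
        show (0 : K) ^ Q = 0
        exact zero_pow (by omega)
      algebraMap_mem' := fun c => by
        show (algebraMap F K c) ^ Q = algebraMap F K c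
        rw [← map_pow, aux_F_pow hF] }
  have hmemT : ∀ z : K, z ∈ T ↔ z ^ Q = z := fun z => Iff.rfl
  -- finiteness
  have hfin : {z : K | z ^ Q = z}.Finite := by
    set P : Polynomial K := Polynomial.X ^ Q - Polynomial.X with hPdef
    have hP0 : P ≠ 0 := by
      intro h
      have hc := congrArg (fun R : Polynomial K => R.coeff Q) h
      simp [hPdef, Polynomial.coeff_X_pow, Polynomial.coeff_X, hQ1.ne] at hc
    refine Set.Finite.subset (Polynomial.finite_setOf_isRoot hP0) ?_
    intro z hz
    simp only [Set.mem_setOf_eq] at hz ⊢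
    simp [hPdef, Polynomial.IsRoot, hz]
  haveI hfT : Fintype T := Set.Finite.fintype hfin
  set k := Module.finrank F T with hkdef
  have hcardT : Fintype.card T = q ^ (2 * k) := by
    rw [Module.card_eq_pow_finrank (K := F) (V := T), hF, ← pow_mul]
  haveI : Nontrivial T := ⟨⟨0, 1, fun hc => zero_ne_one (congrArg Subtype.val hc)⟩⟩
  have hk1 : 1 ≤ k := by
    by_contra hcon
    have : k = 0 := by omega
    have h2 := Fintype.one_lt_card (α := T)
    rw [hcardT, this] at h2
    simp at h2
  -- field structure
  letI : DecidableEq T := Classical.decEq _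
  letI : Field T := Fintype.fieldOfDomain _
  have hallpow : ∀ z : K, z ∈ T → z ^ (q ^ (2 * k)) = z := by
    intro z hz
    have h := FiniteField.pow_card (⟨z, hz⟩ : T)
    rw [hcardT] at h
    have h2 := congrArg Subtype.val h
    rw [SubmonoidClass.coe_pow] at h2
    exact h2
  have hζdT : ζd ∈ T := by
    rw [hmemT]
    exact hpow_of_dvd Q (by omega) hB
  have hC : ζd ^ (q ^ (2 * k)) = ζd := hallpow _ hζdT
  have hQk1 : 1 ≤ q ^ (2 * k) := Nat.one_le_pow _ _ (by omega)
  have hdvd2 : d ∣ q ^ (2 * k) - 1 := by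
    have h1 : ζd ^ (q ^ (2 * k) - 1) * ζd = ζd := by
      rw [← pow_succ]
      have : q ^ (2 * k) - 1 + 1 = q ^ (2 * k) := by omega
      rw [this]; exact hC
    have h2 : ζd ^ (q ^ (2 * k) - 1) = 1 := by
      have := mul_right_cancel₀ hζd0 (h1.trans (one_mul ζd).symm)
      exact this
    exact (hζd.pow_eq_one_iff_dvd _).mp h2
  have hyk : (q ^ (2 * k)) • y = y := by
    apply aux_smul_one
    rw [← hddef]
    have : 1 + (q ^ (2 * k) - 1) = q ^ (2 * k) := by omega
    calc q ^ (2 * k) = 1 + (q ^ (2 * k) - 1) := by omega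
    _ ≡ 1 + 0 [MOD d] := Nat.ModEq.add_left 1 ((Nat.modEq_zero_iff_dvd).mpr hdvd2)
    _ = 1 := by norm_num
  have hper : Function.IsPeriodicPt (fun z : G => (q ^ 2) • z) k y := by
    show (fun z : G => (q ^ 2) • z)^[k] y = y
    rw [aux_iter_smul]; exact hyk
  have hdvd3 : rm ∣ k := Function.IsPeriodicPt.minimalPeriod_dvd hper
  have hrk : rm ≤ k := Nat.le_of_dvd (by omega) hdvd3
  -- trace existence
  set TS : Finset K := Finset.image (fun z : T => (z : K)) Finset.univ with hTSdef
  have hTScard : TS.card = Fintype.card T := by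
    rw [hTSdef, Finset.card_image_of_injective _ Subtype.val_injective, Finset.card_univ]
  obtain ⟨c, hcTS, hsum⟩ := aux_trace_ex hqpe he rm hrpos TS (by
    rw [hTScard, hcardT]
    exact Nat.pow_lt_pow_right (by omega) (by omega))
  have hcT : c ^ Q = c := by
    rw [hTSdef, Finset.mem_image] at hcTS
    obtain ⟨z, -, rfl⟩ := hcTS
    exact z.2
  refine ⟨t⁻¹ * c, ?_, ?_⟩
  · rw [mul_pow, hcT]
    congr 1
    rw [inv_pow, ht]
  · have : ∀ j : ℕ, (t * (t⁻¹ * c)) ^ q ^ (2 * j) = c ^ q ^ (2 * j) := by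
      intro j
      rw [mul_inv_cancel_left₀ ht0]
    simp_rw [this]
    exact hsum

end Aux4

section Aux5
variable {G : Type} [AddCommGroup G] [Fintype G] {F K : Type} [Field F] [Fintype F] [Field K]
  [Algebra F K] [Fintype (AddChar G K)] {q p e : ℕ} [hp : Fact p.Prime] [CharP F p] [CharP K p]
  (hqpe : q = p ^ e) (he : 0 < e) (hF : Fintype.card F = q ^ 2)
  (hn : Nat.Coprime (Fintype.card G) q)
  (hK : ∃ ζ : K, IsPrimitiveRoot ζ (AddMonoid.exponent G))

include hn in
lemma aux_orbit_core (y : G) :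
    ∀ i j : ℕ, i < Function.minimalPeriod (fun z : G => (q ^ 2) • z) y →
      j < Function.minimalPeriod (fun z : G => (q ^ 2) • z) y →
      (q ^ (2 * i)) • y = (q ^ (2 * j)) • y → i = j := by
  have main : ∀ i j : ℕ, i ≤ j →
      j < Function.minimalPeriod (fun z : G => (q ^ 2) • z) y →
      (q ^ (2 * i)) • y = (q ^ (2 * j)) • y → i = j := by
    intro i j hij hj hpt
    have h1 : (q ^ (2 * i)) • ((q ^ (2 * (j - i))) • y) = (q ^ (2 * i)) • y := by
      rw [smul_smul, ← pow_add]
      have : 2 * i + 2 * (j - i) = 2 * j := by omega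
      rw [this, ← hpt]
    have hinj : Function.Injective (fun z : G => (q ^ (2 * i)) • z) := by
      have : (fun z : G => (q ^ (2 * i)) • z) = (fun z : G => (q ^ 2) • z)^[i] := by
        funext z; rw [aux_iter_smul]
      rw [this]
      exact Function.Injective.iterate (aux_smul_inj hn) i
    have h2 : (q ^ (2 * (j - i))) • y = y := hinj h1
    have h3 : Function.IsPeriodicPt (fun z : G => (q ^ 2) • z) (j - i) y := by
      show (fun z : G => (q ^ 2) • z)^[j - i] y = y
      rw [aux_iter_smul]; exact h2
    have h4 := Function.IsPeriodicPt.minimalPeriod_dvd h3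
    have h5 : j - i < Function.minimalPeriod (fun z : G => (q ^ 2) • z) y := by omega
    have h6 : j - i = 0 := by
      rcases Nat.eq_zero_or_pos (j - i) with h | h
      · exact h
      · exact absurd (Nat.le_of_dvd h h4) (by omega)
    omega
  intro i j hi hj hpt
  rcases le_total i j with h | h
  · exact main i j h hj hpt
  · exact (main j i h hi hpt.symm).symm

include hqpe he hF hn hK in
lemma aux_orbit [DecidableEq G] (Z : Set G) (hZ : ∀ x ∈ Z, (q ^ 2) • x ∈ Z) (y : G)
    (hy : y ∉ Z) (c : K)
    (hc : c ^ q ^ (2 * Function.minimalPeriod (fun z : G => (q ^ 2) • z) y) = c) :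
    ∃ a : AddChar G K → F, ∀ x : G,
      evalF a x = ∑ j ∈ Finset.range (Function.minimalPeriod (fun z : G => (q ^ 2) • z) y),
        if x = (q ^ (2 * j)) • y then c ^ q ^ (2 * j) else 0 := by
  classical
  set rm := Function.minimalPeriod (fun z : G => (q ^ 2) • z) y with hrmdef
  have hrpos : 0 < rm := Function.minimalPeriod_pos_of_mem_periodicPts (aux_periodic hn y)
  haveI : NeZero rm := ⟨hrpos.ne'⟩
  have hA : (q ^ (2 * rm)) • y = y := by
    have h1 : (fun z : G => (q ^ 2) • z)^[rm] y = y := Function.iterate_minimalPeriod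
    rw [aux_iter_smul] at h1
    exact h1
  set pt : ZMod rm → G := fun j => (q ^ (2 * j.val)) • y with hptdef
  set cf : ZMod rm → K := fun j => c ^ q ^ (2 * j.val) with hcfdef
  have hvalsucc : ∀ j : ZMod rm, (j + 1).val = (j.val + 1) % rm := by
    intro j
    rcases Nat.eq_or_lt_of_le (Nat.one_le_iff_ne_zero.mpr (NeZero.ne rm)) with h1 | h1
    · haveI : Subsingleton (ZMod rm) := by rw [← h1]; infer_instance
      have : ∀ z : ZMod rm, z = 0 := fun z => Subsingleton.elim z 0
      rw [this (j + 1), this j, ← h1]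
      simp [Nat.mod_one]
    · haveI : Fact (1 < rm) := ⟨h1⟩
      rw [ZMod.val_add, ZMod.val_one]
  have hptsucc : ∀ j : ZMod rm, pt (j + 1) = (q ^ 2) • pt j := by
    intro j
    rw [hptdef]
    simp only
    rw [hvalsucc j, smul_smul, ← pow_add]
    have hjlt : j.val < rm := ZMod.val_lt j
    have hcase : j.val + 1 = rm ∨ j.val + 1 < rm := by omega
    rcases hcase with h1 | h1
    · rw [h1, Nat.mod_self, mul_zero, pow_zero, one_smul]
      have h2 : 2 + 2 * j.val = 2 * rm := by omega
      rw [h2, hA]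
    · rw [Nat.mod_eq_of_lt h1]
      have h2 : 2 * (j.val + 1) = 2 + 2 * j.val := by omega
      rw [h2]
  have hcfsucc : ∀ j : ZMod rm, cf (j + 1) = cf j ^ q ^ 2 := by
    intro j
    rw [hcfdef]
    simp only
    rw [hvalsucc j, ← pow_mul, ← pow_add]
    have hjlt : j.val < rm := ZMod.val_lt j
    have hcase : j.val + 1 = rm ∨ j.val + 1 < rm := by omega
    rcases hcase with h1 | h1
    · rw [h1, Nat.mod_self, mul_zero, pow_zero, pow_one]
      have h2 : 2 * j.val + 2 = 2 * rm := by omega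
      rw [h2, hc]
    · rw [Nat.mod_eq_of_lt h1]
      have h2 : 2 * (j.val + 1) = 2 * j.val + 2 := by omega
      rw [h2]
  have hptinj : Function.Injective pt := by
    intro i j hij
    have := aux_orbit_core hn y i.val j.val (ZMod.val_lt i) (ZMod.val_lt j) hij
    exact ZMod.val_injective rm this
  set g : G → K := fun x => ∑ j : ZMod rm, if x = pt j then cf j else 0 with hgdef
  have hg : ∀ x : G, g ((q ^ 2) • x) = g x ^ q ^ 2 := by
    intro x
    have hcond : ∀ j : ZMod rm, ((q ^ 2) • x = pt j) ↔ (x = pt (j - 1)) := by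
      intro j
      have h1 : pt j = (q ^ 2) • pt (j - 1) := by
        rw [← hptsucc (j - 1), sub_add_cancel]
      rw [h1]
      exact ⟨fun h => (aux_smul_inj hn) h, fun h => by rw [h]⟩
    calc g ((q ^ 2) • x) = ∑ j : ZMod rm, if x = pt (j - 1) then cf j else 0 := by
          rw [hgdef]
          exact Finset.sum_congr rfl fun j _ => by rw [if_congr (hcond j) rfl rfl]
    _ = ∑ j : ZMod rm, if x = pt j then cf (j + 1) else 0 := by
          apply Fintype.sum_equiv (Equiv.subRight (1 : ZMod rm))
          intro j
          rw [show (Equiv.subRight (1 : ZMod rm)) j = j - 1 from rfl, sub_add_cancel]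
    _ = ∑ j : ZMod rm, (if x = pt j then cf j else 0) ^ q ^ 2 := by
          refine Finset.sum_congr rfl fun j _ => ?_
          split_ifs with h
          · exact hcfsucc j
          · have hq2 : 2 ≤ q := aux_q2 hqpe he
            exact (zero_pow (pow_ne_zero 2 (by omega))).symm
    _ = g x ^ q ^ 2 := by
          rw [hgdef]
          simp only
          rw [aux_sum_pow hqpe]
  obtain ⟨a, ha⟩ := aux_inversion hqpe he hF hn hK g hg
  refine ⟨a, fun x => ?_⟩
  rw [ha]
  rw [hgdef]
  simp only
  refine Finset.sum_nbij' (fun j => j.val) (fun i => (i : ZMod rm)) ?_ ?_ ?_ ?_ ?_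
  · intro j _; exact Finset.mem_range.mpr (ZMod.val_lt j)
  · intro i _; exact Finset.mem_univ _
  · intro j _; exact ZMod.natCast_rightInverse j
  · intro i hi; exact ZMod.val_cast_of_lt (Finset.mem_range.mp hi)
  · intro j _; rfl

include hqpe he hF hn hK in
lemma aux_test1 (Z : Set G) (hZ : ∀ x ∈ Z, (q ^ 2) • x ∈ Z) (y : G) (hy : y ∉ Z) :
    ∃ a : AddChar G K → F, (∀ x ∈ Z, evalF a x = 0) ∧ evalF a y ≠ 0 := by
  classical
  set rm := Function.minimalPeriod (fun z : G => (q ^ 2) • z) y with hrmdef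
  have hrpos : 0 < rm := Function.minimalPeriod_pos_of_mem_periodicPts (aux_periodic hn y)
  obtain ⟨a, ha⟩ := aux_orbit hqpe he hF hn hK Z hZ y hy (1 : K) (one_pow _)
  refine ⟨a, ?_, ?_⟩
  · intro x hx
    rw [ha]
    apply Finset.sum_eq_zero
    intro j _
    rw [if_neg]
    intro hxy
    exact (aux_orbit_miss hn Z hZ y hy j) (hxy ▸ hx)
  · rw [ha y]
    have hval : ∀ j ∈ Finset.range rm,
        (if y = (q ^ (2 * j)) • y then (1 : K) ^ q ^ (2 * j) else 0)
        = if j = 0 then 1 else 0 := by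
      intro j hj
      rcases Nat.eq_zero_or_pos j with h | h
      · subst h; simp
      · have hne : ¬ (y = (q ^ (2 * j)) • y) := by
          intro hyy
          have h0 : (q ^ (2 * 0)) • y = (q ^ (2 * j)) • y := by
            rw [mul_zero, pow_zero, one_smul]; exact hyy
          have := aux_orbit_core hn y 0 j hrpos (Finset.mem_range.mp hj) h0
          omega
        rw [if_neg hne, if_neg (by omega)]
    rw [Finset.sum_congr rfl hval]
    rw [Finset.sum_ite_eq' (Finset.range rm) 0 (fun _ => (1 : K))]
    simp [hrpos]

include hqpe he hF hn hK in
lemma aux_test2 (Z : Set G) (hZ : ∀ x ∈ Z, (q ^ 2) • x ∈ Z) (u : AddChar G K → F)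
    (hu : ∀ a : AddChar G K → F, (∀ x ∈ Z, evalF a x = 0) →
      ∑ ψ : AddChar G K, u ψ * a ψ = 0) :
    ∀ y : G, y ∉ Z → evalF u (-y) = 0 := by
  classical
  intro y hy
  by_contra ht0
  set t := evalF u (-y) with htdef
  set rm := Function.minimalPeriod (fun z : G => (q ^ 2) • z) y with hrmdef
  have hrpos : 0 < rm := Function.minimalPeriod_pos_of_mem_periodicPts (aux_periodic hn y)
  have hA : (q ^ (2 * rm)) • y = y := by
    have h1 : (fun z : G => (q ^ 2) • z)^[rm] y = y := Function.iterate_minimalPeriod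
    rw [aux_iter_smul] at h1
    exact h1
  have htT : t ^ q ^ (2 * rm) = t := by
    rw [htdef, ← aux_funct hqpe hF u rm (-y), smul_neg, hA]
  obtain ⟨c, hcT, hsum⟩ := aux_trace_t hqpe he hF hn hK y t ht0 htT
  obtain ⟨a, ha⟩ := aux_orbit hqpe he hF hn hK Z hZ y hy c hcT
  have hvan : ∀ x ∈ Z, evalF a x = 0 := by
    intro x hx
    rw [ha]
    apply Finset.sum_eq_zero
    intro j _
    rw [if_neg]
    intro hxy
    exact (aux_orbit_miss hn Z hZ y hy j) (hxy ▸ hx)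
  have h0 := hu a hvan
  have hpair := aux_pairing u a
  rw [h0, map_zero, mul_zero] at hpair
  have hcompute : ∑ x : G, evalF u (-x) * evalF a x
      = ∑ j ∈ Finset.range rm, (t * c) ^ q ^ (2 * j) := by
    simp_rw [ha, Finset.mul_sum]
    rw [Finset.sum_comm]
    refine Finset.sum_congr rfl fun j hj => ?_
    have hstep : ∀ x : G,
        evalF u (-x) * (if x = (q ^ (2 * j)) • y then c ^ q ^ (2 * j) else 0)
        = if x = (q ^ (2 * j)) • y then evalF u (-x) * c ^ q ^ (2 * j) else 0 := by
      intro x; split_ifs <;> simp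
    simp_rw [hstep]
    rw [Finset.sum_ite_eq' Finset.univ ((q ^ (2 * j)) • y)
      (fun x => evalF u (-x) * c ^ q ^ (2 * j))]
    simp only [Finset.mem_univ, if_true]
    rw [← smul_neg, aux_funct hqpe hF u j (-y), mul_pow]
  rw [hcompute] at hpair
  exact hsum hpair.symm

end Aux5

section Aux6
variable {G : Type} [AddCommGroup G] [Fintype G] {F K : Type} [Field F] [Fintype F] [Field K]
  [Algebra F K] [Fintype (AddChar G K)] {q p e : ℕ} [hp : Fact p.Prime] [CharP F p] [CharP K p]
  (hqpe : q = p ^ e) (he : 0 < e) (hF : Fintype.card F = q ^ 2)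
  (hn : Nat.Coprime (Fintype.card G) q)
  (hK : ∃ ζ : K, IsPrimitiveRoot ζ (AddMonoid.exponent G))

include hqpe in
lemma aux_powq_neg (x : F) : (-x) ^ q = -(x ^ q) := by
  have := aux_neg_pow (R := F) hqpe 1 x
  simpa [pow_one] using this

include hqpe in
lemma aux_powq_sum {ι : Type*} (s : Finset ι) (f : ι → F) :
    (∑ i ∈ s, f i) ^ q = ∑ i ∈ s, f i ^ q := by
  have := aux_sum_pow (R := F) hqpe 1 s f
  simpa [pow_one] using this

lemma aux_evalF_zero (a : AddChar G K → F) :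
    evalF a 0 = algebraMap F K (∑ ψ : AddChar G K, a ψ) := by
  unfold evalF
  rw [map_sum]
  exact Finset.sum_congr rfl fun ψ _ => by rw [AddChar.map_zero_eq_one, mul_one]

lemma aux_evalF_sub_const (a : AddChar G K → F) (cc : F) (x : G) :
    evalF (fun ψ => a ψ - cc) x
      = evalF a x - algebraMap F K cc * ∑ ψ : AddChar G K, ψ x := by
  unfold evalF
  rw [Finset.mul_sum, ← Finset.sum_sub_distrib]
  exact Finset.sum_congr rfl fun ψ _ => by rw [map_sub, sub_mul]

lemma aux_evalF_add_const (a : AddChar G K → F) (cc : F) (x : G) :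
    evalF (fun ψ => a ψ + cc) x
      = evalF a x + algebraMap F K cc * ∑ ψ : AddChar G K, ψ x := by
  unfold evalF
  rw [Finset.mul_sum, ← Finset.sum_add_distrib]
  exact Finset.sum_congr rfl fun ψ _ => by rw [map_add, add_mul]

lemma aux_mem_ext (γ : F) (C : Set (AddChar G K → F)) (v : Option (AddChar G K) → F) :
    v ∈ extCode γ C ↔ (v ∘ some) ∈ C ∧ v none = -γ * ∑ ψ : AddChar G K, v (some ψ) := by
  constructor
  · rintro ⟨b, hb, rfl⟩
    refine ⟨hb, rfl⟩
  · rintro ⟨h1, h2⟩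
    refine ⟨v ∘ some, h1, funext fun o => ?_⟩
    cases o with
    | none => exact h2.symm
    | some ψ => rfl

include hqpe he in
lemma aux_hermExt_formula (γ : F) (v : Option (AddChar G K) → F) (b : AddChar G K → F) :
    hermExt q v (extWord γ b)
      = ∑ ψ : AddChar G K, (v (some ψ) - v none * γ ^ q) * (b ψ) ^ q := by
  unfold hermExt extWord
  rw [Fintype.sum_option]
  simp only [Option.elim]
  have h1 : (-γ * ∑ ψ : AddChar G K, b ψ) ^ q
      = -(γ ^ q * ∑ ψ : AddChar G K, (b ψ) ^ q) := by
    rw [neg_mul, aux_powq_neg hqpe, mul_pow, aux_powq_sum hqpe]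
  rw [h1]
  have h2 : ∀ ψ : AddChar G K, (v (some ψ) - v none * γ ^ q) * (b ψ) ^ q
      = v (some ψ) * (b ψ) ^ q - v none * (γ ^ q * (b ψ) ^ q) := fun ψ => by ring
  simp_rw [h2]
  rw [Finset.sum_sub_distrib, ← Finset.mul_sum, ← Finset.mul_sum]
  ring

include hqpe he in
lemma aux_mem_D (γ : F) (X : Set G) (v : Option (AddChar G K) → F) :
    v ∈ dualExt F K q (extCode γ (codeSet F K X)) ↔
      ∀ b ∈ codeSet F K X,
        ∑ ψ : AddChar G K, (v (some ψ) - v none * γ ^ q) * (b ψ) ^ q = 0 := by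
  unfold dualExt extCode
  rw [Set.mem_setOf_eq, Set.forall_mem_image]
  constructor
  · intro h b hb
    have := h hb
    rwa [aux_hermExt_formula hqpe he] at this
  · intro h b hb
    rw [aux_hermExt_formula hqpe he]
    exact h b hb

include hqpe he hF in
lemma aux_sigma (X : Set G) (w : AddChar G K → F) :
    (∀ b ∈ codeSet F K X, ∑ ψ : AddChar G K, w ψ * (b ψ) ^ q = 0) ↔
      (∀ b ∈ codeSet F K X, ∑ ψ : AddChar G K, (w ψ) ^ q * b ψ = 0) := by
  have hq0 : q ≠ 0 := by have := aux_q2 hqpe he; omega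
  have key : ∀ b : AddChar G K → F,
      ∑ ψ : AddChar G K, w ψ * (b ψ) ^ q
        = (∑ ψ : AddChar G K, (w ψ) ^ q * b ψ) ^ q := by
    intro b
    rw [aux_powq_sum hqpe]
    refine Finset.sum_congr rfl fun ψ _ => ?_
    rw [mul_pow, ← pow_mul, ← pow_two, aux_F_pow_q2 hF]
  constructor
  · intro h b hb
    have h2 := h b hb
    rw [key b] at h2
    exact pow_eq_zero_iff hq0 |>.mp h2
  · intro h b hb
    rw [key b, h b hb]
    exact zero_pow hq0

include hqpe he hF hn hK in
lemma aux_lemC (X : Set G) (hXs : ∀ x ∈ X, (q ^ 2) • x ∈ X) (u : AddChar G K → F) :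
    (∀ a : AddChar G K → F, (∀ x ∈ X, evalF a x = 0) →
        ∑ ψ : AddChar G K, u ψ * a ψ = 0) ↔
      ∀ x : G, x ∉ X → evalF u (-x) = 0 := by
  constructor
  · intro h
    exact aux_test2 hqpe he hF hn hK X hXs u h
  · intro h a ha
    have hpair := aux_pairing u a
    have hzero : ∑ x : G, evalF u (-x) * evalF a x = 0 := by
      apply Finset.sum_eq_zero
      intro x _
      by_cases hx : x ∈ X
      · rw [ha x hx, mul_zero]
      · rw [h x hx, zero_mul]
    rw [hzero] at hpair
    have hnK : ((Fintype.card G : K)) ≠ 0 := aux_nK_ne hqpe he hn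
    have h2 : algebraMap F K (∑ ψ : AddChar G K, u ψ * a ψ) = 0 := by
      rcases mul_eq_zero.mp hpair with h3 | h3
      · exact absurd h3 hnK
      · exact h3
    exact (map_eq_zero_iff _ (algebraMap F K).injective).mp h2

end Aux6

/-- Let `G` have odd order `n` coprime to the prime power `q`, let
`C = I_X` be a group code in `F[G*]` defined over `F = F_{q²}` (i.e. `X` is a union of
`⟨τ_{q²}⟩`-orbits), and fix `γ ∈ F` with `1/n + γ^{q+1} = 0`.  Then the extended code
`~C` is Hermitian self-dual if and only if `C` is a split group code associated to a
splitting `(Z = {0}, X₀, X₁)` of `G` given by `-q`, i.e. `C = I_{X₀}` for a partition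
`G = {0} ∪ X₀ ∪ X₁` with `τ_{-q}(X₀) = X₁` and `τ_{-q}(X₁) = X₀`. -/
theorem stmt6
    {G : Type} [AddCommGroup G] [Fintype G]
    {F K : Type} [Field F] [Fintype F] [Field K] [Algebra F K]
    [Fintype (AddChar G K)]
    (q : ℕ) (hq : IsPrimePow q)
    (hF : Fintype.card F = q ^ 2)
    (hn : Nat.Coprime (Fintype.card G) q)
    (hodd : Odd (Fintype.card G))
    (hK : ∃ ζ : K, IsPrimitiveRoot ζ (AddMonoid.exponent G))
    (γ : F) (hγ : (Fintype.card G : F)⁻¹ + γ ^ (q + 1) = 0)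
    (X : Set G)
    (hX : ∀ x ∈ X, ((q : ℤ) ^ 2) • x ∈ X) :
    dualExt F K q (extCode γ (codeSet F K X)) = extCode γ (codeSet F K X) ↔
      ∃ X₀ X₁ : Set G,
        ({0} : Set G) ∪ X₀ ∪ X₁ = Set.univ ∧
        (0 : G) ∉ X₀ ∧ (0 : G) ∉ X₁ ∧ Disjoint X₀ X₁ ∧
        tauImg (-(q : ℤ)) X₀ = X₁ ∧ tauImg (-(q : ℤ)) X₁ = X₀ ∧
        X = X₀ := by
  classical
  obtain ⟨p, e, hpP, he, hpe⟩ := hq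
  have hqpe : q = p ^ e := hpe.symm
  haveI hpfact : Fact p.Prime := ⟨Nat.prime_iff.mpr hpP⟩
  have hrc : ringChar F = p := by
    obtain ⟨n', hprime, hcard⟩ := FiniteField.card F (ringChar F)
    have h1 : (ringChar F) ∣ q ^ 2 := by
      rw [← hF, hcard]
      exact dvd_pow_self _ n'.pos.ne'
    have h2 : (ringChar F) ∣ p := by
      rw [hqpe, ← pow_mul] at h1
      exact hprime.dvd_of_dvd_pow h1
    exact (Nat.prime_dvd_prime_iff_eq hprime hpfact.out).mp h2
  haveI hCF : CharP F p := hrc ▸ ringChar.charP F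
  haveI hCK : CharP K p := charP_of_injective_algebraMap (algebraMap F K).injective p
  have hq2 : 2 ≤ q := aux_q2 hqpe he
  have hq0 : q ≠ 0 := by omega
  have hnF : (Fintype.card G : F) ≠ 0 := aux_n_ne hqpe he hn
  have hγq1 : γ ^ (q + 1) = -(Fintype.card G : F)⁻¹ := eq_neg_of_add_eq_zero_right hγ
  -- the inverse multiplier
  set q' : ℕ := q ^ ((Fintype.card G).totient - 1) with hq'def
  have htot : 0 < (Fintype.card G).totient := Nat.totient_pos.2 Fintype.card_pos
  have hq'q : ∀ z : G, q • (q' • z) = z := by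
    intro z
    rw [smul_smul]
    have h1 : q * q' = q ^ (Fintype.card G).totient := by
      rw [hq'def, ← pow_succ']
      congr 1
      omega
    rw [h1]
    exact aux_smul_card (Nat.ModEq.pow_totient hn.symm) z
  have hq'q2 : ∀ z : G, q' • (q • z) = z := by
    intro z
    rw [smul_smul, mul_comm, ← smul_smul]
    exact hq'q z
  -- stability of X
  have hXs : ∀ x ∈ X, (q ^ 2) • x ∈ X := by
    intro x hx
    have h1 := hX x hx
    have h2 : ((q : ℤ) ^ 2) • x = (q ^ 2) • x := by
      rw [show ((q : ℤ) ^ 2) = ((q ^ 2 : ℕ) : ℤ) by push_cast; ring, natCast_zsmul]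
    rwa [h2] at h1
  -- the maps τ_{-q} and its inverse
  set tm : G → G := fun z => -(q • z) with htm
  set gm : G → G := fun z => q' • (-z) with hgm
  have hgt : ∀ z, gm (tm z) = z := by
    intro z
    show q' • (-(-(q • z))) = z
    rw [neg_neg]
    exact hq'q2 z
  have htg : ∀ z, tm (gm z) = z := by
    intro z
    show -(q • (q' • (-z))) = z
    rw [hq'q (-z), neg_neg]
  have hfun_tm : (fun x : G => (-(q : ℤ)) • x) = tm := by
    funext x
    show (-(q : ℤ)) • x = -(q • x)
    rw [neg_zsmul, natCast_zsmul]
  have htauImg : ∀ S : Set G, tauImg (-(q : ℤ)) S = tm '' S := by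
    intro S
    unfold tauImg
    rw [hfun_tm]
  have hgm0 : gm 0 = 0 := by rw [hgm]; simp
  have htm0 : tm 0 = 0 := by rw [htm]; simp
  have htminj : Function.Injective tm := by
    intro x y hxy
    have := congrArg gm hxy
    rwa [hgt, hgt] at this
  have htmtm : ∀ x : G, tm (tm x) = (q ^ 2) • x := by
    intro x
    show -(q • -(q • x)) = (q ^ 2) • x
    rw [smul_neg, neg_neg, smul_smul, ← pow_two]
  -- Y
  set Y : Set G := gm '' Xᶜ with hY
  have h0Y : (0 : G) ∉ X → (0 : G) ∈ Y := fun h => ⟨0, h, hgm0⟩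
  -- membership characterization for the dual
  have hDmem : ∀ v : Option (AddChar G K) → F,
      v ∈ dualExt F K q (extCode γ (codeSet F K X)) ↔
        (∀ y ∈ Y, evalF (fun ψ => v (some ψ) - v none * γ ^ q) y = 0) := by
    intro v
    set w : AddChar G K → F := fun ψ => v (some ψ) - v none * γ ^ q with hw
    have step1 := aux_mem_D hqpe he γ X v
    have step2 := aux_sigma hqpe he hF X w
    have step3 := aux_lemC hqpe he hF hn hK X hXs (fun ψ => w ψ ^ q)
    have step4 : (∀ x : G, x ∉ X → evalF (fun ψ => w ψ ^ q) (-x) = 0) ↔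
        (∀ y ∈ Y, evalF w y = 0) := by
      rw [hY, Set.forall_mem_image]
      constructor
      · intro h x hx
        have h5 : evalF (fun ψ => w ψ ^ q) (q • (gm x)) = (evalF w (gm x)) ^ q :=
          aux_funct_q hqpe hF w (gm x)
        have h6 : q • gm x = -x := by
          rw [hgm]
          exact hq'q (-x)
        rw [h6] at h5
        have h7 := h x hx
        rw [h7] at h5
        exact (pow_eq_zero_iff hq0).mp h5.symm
      · intro h x hx
        have h5 : evalF (fun ψ => w ψ ^ q) (q • (gm x)) = (evalF w (gm x)) ^ q :=
          aux_funct_q hqpe hF w (gm x)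
        have h6 : q • gm x = -x := by
          rw [hgm]
          exact hq'q (-x)
        rw [h6] at h5
        have h7 : evalF w (gm x) = 0 := h (show x ∈ Xᶜ from hx)
        rw [h5, h7]
        exact zero_pow hq0
    exact step1.trans (step2.trans (step3.trans step4))
  constructor
  · -- forward direction
    intro hEq
    -- Q1 : 0 ∉ X
    have hQ1 : (0 : G) ∉ X := by
      intro h0
      set v : Option (AddChar G K) → F := fun o => o.elim 1 0 with hv
      have hvD : v ∈ dualExt F K q (extCode γ (codeSet F K X)) := by
        rw [aux_mem_D hqpe he]
        intro b hb
        have hSb : ∑ ψ : AddChar G K, b ψ = 0 := by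
          have h2 : evalF b 0 = 0 := hb 0 h0
          rw [aux_evalF_zero] at h2
          exact (map_eq_zero_iff _ (algebraMap F K).injective).mp h2
        have hform : ∀ ψ : AddChar G K,
            (v (some ψ) - v none * γ ^ q) * (b ψ) ^ q = -(γ ^ q * (b ψ) ^ q) := by
          intro ψ
          show ((0 : F) - 1 * γ ^ q) * (b ψ) ^ q = _
          ring
        simp_rw [hform]
        rw [Finset.sum_neg_distrib, ← Finset.mul_sum, ← aux_powq_sum hqpe, hSb,
          zero_pow hq0, mul_zero, neg_zero]
      rw [hEq, aux_mem_ext] at hvD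
      have h3 := hvD.2
      have h4 : v none = 1 := rfl
      have h5 : ∀ ψ : AddChar G K, v (some ψ) = 0 := fun ψ => rfl
      rw [h4] at h3
      simp only [h5, Finset.sum_const_zero, mul_zero] at h3
      exact one_ne_zero h3
    -- stability of the complement and of Y
    have hXc : ∀ x : G, x ∉ X → (q ^ 2) • x ∉ X :=
      fun x hx hc => hx (aux_stab_back hn X hXs x hc)
    have hYs : ∀ y ∈ Y, (q ^ 2) • y ∈ Y := by
      rintro y ⟨x, hx, rfl⟩
      refine ⟨(q ^ 2) • x, hXc x hx, ?_⟩
      show q' • -((q ^ 2) • x) = (q ^ 2) • (q' • (-x))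
      rw [← smul_neg, smul_smul, smul_smul, mul_comm]
    -- Q3 : X ⊆ Y
    have hQ3 : X ⊆ Y := by
      intro x₀ hx₀
      by_contra hx₀Y
      obtain ⟨a, ha1, ha2⟩ := aux_test1 hqpe he hF hn hK Y hYs x₀ hx₀Y
      set v : Option (AddChar G K) → F := fun o => o.elim 0 a with hv
      have hvD : v ∈ dualExt F K q (extCode γ (codeSet F K X)) := by
        rw [hDmem v]
        intro y hy
        have hweq : (fun ψ => v (some ψ) - v none * γ ^ q) = a := by
          funext ψ
          show a ψ - 0 * γ ^ q = a ψ
          ring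
        rw [hweq]
        exact ha1 y hy
      rw [hEq, aux_mem_ext] at hvD
      exact ha2 (hvD.1 x₀ hx₀)
    -- Q2 : Y \ {0} ⊆ X
    have hQ2 : ∀ y ∈ Y, y ≠ 0 → y ∈ X := by
      intro y₀ hy₀ hy₀0
      by_contra hy₀X
      obtain ⟨a, ha1, ha2⟩ := aux_test1 hqpe he hF hn hK X hXs y₀ hy₀X
      have haD : extWord γ a ∈ dualExt F K q (extCode γ (codeSet F K X)) := by
        rw [hEq]
        exact ⟨a, ha1, rfl⟩
      rw [hDmem] at haD
      have h4 := haD y₀ hy₀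
      have hwa : (fun ψ => extWord γ a (some ψ) - extWord γ a none * γ ^ q)
          = fun ψ => a ψ - (-(γ ^ (q + 1))) * (∑ χ : AddChar G K, a χ) := by
        funext ψ
        show a ψ - (-γ * ∑ χ : AddChar G K, a χ) * γ ^ q = _
        ring
      rw [hwa, aux_evalF_sub_const, aux_sum_chars hK y₀, if_neg hy₀0, mul_zero,
        sub_zero] at h4
      exact ha2 h4
    -- assemble the splitting
    have hYeq : Y = {0} ∪ X := by
      apply Set.Subset.antisymm
      · intro y hy
        by_cases h : y = 0
        · left; exact h
        · right; exact hQ2 y hy h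
      · intro y hy
        rcases hy with h | h
        · rw [Set.mem_singleton_iff] at h
          rw [h]
          exact h0Y hQ1
        · exact hQ3 h
    have htmY : tm '' Y = Xᶜ := by
      rw [hY, Set.image_image]
      have h1 : (fun x => tm (gm x)) = fun x : G => x := funext htg
      rw [h1, Set.image_id']
    have htmX : tm '' X = {z : G | z ≠ 0 ∧ z ∉ X} := by
      have h1 : Xᶜ = {0} ∪ tm '' X := by
        rw [← htmY, hYeq, Set.image_union, Set.image_singleton, htm0]
      have h0tm : (0 : G) ∉ tm '' X := by
        rintro ⟨x, hx, hx0⟩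
        have : x = 0 := by
          have := congrArg gm hx0
          rwa [hgt, hgm0] at this
        exact hQ1 (this ▸ hx)
      ext z
      constructor
      · intro hz
        have hz1 : z ∈ Xᶜ := by rw [h1]; right; exact hz
        have hz2 : z ≠ 0 := fun hc => h0tm (hc ▸ hz)
        exact ⟨hz2, hz1⟩
      · rintro ⟨hz1, hz2⟩
        have : z ∈ Xᶜ := hz2
        rw [h1] at this
        rcases this with h | h
        · exact absurd h hz1
        · exact h
    have htmX₁ : tm '' {z : G | z ≠ 0 ∧ z ∉ X} = X := by
      rw [← htmX, Set.image_image]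
      have h1 : (fun x => tm (tm x)) = fun x : G => (q ^ 2) • x := funext htmtm
      rw [h1]
      apply Set.eq_of_subset_of_ncard_le
      · rintro z ⟨x, hx, rfl⟩
        exact hXs x hx
      · rw [Set.ncard_image_of_injective X (aux_smul_inj hn)]
      · exact X.toFinite
    refine ⟨X, {z : G | z ≠ 0 ∧ z ∉ X}, ?_, hQ1, ?_, ?_, ?_, ?_, rfl⟩
    · ext z
      simp only [Set.mem_union, Set.mem_singleton_iff, Set.mem_setOf_eq, Set.mem_univ,
        iff_true]
      tauto
    · simp only [Set.mem_setOf_eq]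
      tauto
    · rw [Set.disjoint_left]
      intro z hz hz1
      exact hz1.2 hz
    · rw [htauImg]
      exact htmX
    · rw [htauImg]
      exact htmX₁
  · -- backward direction
    rintro ⟨X₀, X₁, hunion, h0X₀, h0X₁, hdisj, ht0, ht1, rfl⟩
    rw [htauImg] at ht0 ht1
    have hXc : Xᶜ = {0} ∪ X₁ := by
      ext z
      simp only [Set.mem_compl_iff, Set.mem_union, Set.mem_singleton_iff]
      constructor
      · intro hz
        have hz2 : z ∈ ({0} : Set G) ∪ X ∪ X₁ := by rw [hunion]; trivial
        rcases hz2 with (h | h) | h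
        · left; exact h
        · exact absurd h hz
        · right; exact h
      · rintro (rfl | hz)
        · exact h0X₀
        · exact fun hzX => (Set.disjoint_left.mp hdisj hzX) hz
    have hgmX₁ : gm '' X₁ = X := by
      rw [← ht0, Set.image_image]
      have h1 : (fun x => gm (tm x)) = fun x : G => x := funext hgt
      rw [h1, Set.image_id']
    have hYeq : Y = {0} ∪ X := by
      rw [hY, hXc, Set.image_union, Set.image_singleton, hgm0, hgmX₁]
    ext v
    rw [hDmem v, aux_mem_ext]
    set w : AddChar G K → F := fun ψ => v (some ψ) - v none * γ ^ q with hw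
    constructor
    · intro hvY
      have hw0 : ∑ ψ : AddChar G K, w ψ = 0 := by
        have h1 : evalF w 0 = 0 := hvY 0 (by rw [hYeq]; exact Set.mem_union_left _ rfl)
        rw [aux_evalF_zero] at h1
        exact (map_eq_zero_iff _ (algebraMap F K).injective).mp h1
      constructor
      · intro x hx
        have hx0 : x ≠ 0 := fun hc => h0X₀ (hc ▸ hx)
        have h2 : evalF w x = 0 := hvY x (by rw [hYeq]; exact Set.mem_union_right _ hx)
        have h3 : evalF (v ∘ some) x = evalF w x
            + algebraMap F K (v none * γ ^ q) * ∑ ψ : AddChar G K, ψ x := by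
          have h4 : (v ∘ some) = fun ψ => w ψ + v none * γ ^ q := by
            funext ψ
            show v (some ψ) = v (some ψ) - v none * γ ^ q + v none * γ ^ q
            ring
          rw [h4, aux_evalF_add_const]
        rw [h3, h2, aux_sum_chars hK x, if_neg hx0, mul_zero, add_zero]
      · have hsum : ∑ ψ : AddChar G K, v (some ψ)
            = ∑ ψ : AddChar G K, (w ψ + v none * γ ^ q) := by
          refine Finset.sum_congr rfl fun ψ _ => ?_
          show v (some ψ) = v (some ψ) - v none * γ ^ q + v none * γ ^ q
          ring
        rw [hsum, Finset.sum_add_distrib, hw0, zero_add, Finset.sum_const,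
          Finset.card_univ, aux_card hK, nsmul_eq_mul]
        have hcalc : -γ * ((Fintype.card G : F) * (v none * γ ^ q))
            = γ ^ (q + 1) * (-((Fintype.card G : F) * v none)) := by ring
        rw [hcalc, hγq1]
        field_simp
    · rintro ⟨hsome, hnone⟩
      intro y hy
      have hwa : w = fun ψ => v (some ψ)
          - (-(γ ^ (q + 1))) * (∑ χ : AddChar G K, v (some χ)) := by
        funext ψ
        rw [hw]
        simp only
        rw [hnone]
        ring
      rw [hwa, aux_evalF_sub_const]
      rw [hYeq] at hy
      rcases hy with h | h
      · rw [Set.mem_singleton_iff] at h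
        subst h
        rw [aux_sum_chars hK 0, if_pos rfl, aux_evalF_zero]
        have h5 : (∑ χ : AddChar G K, v (some χ))
            - (-(γ ^ (q + 1))) * (∑ χ : AddChar G K, v (some χ)) * (Fintype.card G : F)
            = 0 := by
          rw [hγq1]
          field_simp
          ring
        rw [show (Fintype.card G : K) = algebraMap F K ((Fintype.card G : F)) by simp,
          ← map_mul, ← map_sub, h5, map_zero]
      · have hy0 : y ≠ 0 := fun hc => h0X₀ (hc ▸ h)
        have h6 : evalF (fun ψ => v (some ψ)) y = 0 := hsome y h
        rw [h6, aux_sum_chars hK y, if_neg hy0, mul_zero, sub_zero]
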